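/- Landen's identity: for z not in the lattice (½)ℤ + (τ/2)ℤ, the derivative of the Weierstrass function satisfies ℘′(z, τ/2) = ℘′(z, τ) + ℘′(z + τ/2, τ). -/

import Mathlib

/-!
Split the lattice `ℤ + (τ/2)ℤ` by the parity of the `τ/2`-coordinate: the even points form
`ℤ + τℤ` and the odd points form `τ/2 + ℤ + τℤ`. The cubic series converges absolutely (the
exponent exceeds the rank 2), so it may be regrouped along this partition.
-/

open Complex

noncomputable section

/-- The derivative of the Weierstrass ℘-function for the lattice `ℤ + τℤ`:
`℘′(z, τ) = −2 ∑_{(m,n) ∈ ℤ²} 1/(z+m+nτ)³`. -/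
def wpT' (τ z : ℂ) : ℂ :=
  -2 * ∑' p : ℤ × ℤ, 1 / (z + (p.1 : ℂ) + (p.2 : ℂ) * τ) ^ 3

theorem HasSum.even_add_odd_snd {M α : Type*} [AddCommMonoid M] [TopologicalSpace M]
    [ContinuousAdd M] {f : α × ℤ → M} {a b : M}
    (he : HasSum (fun p : α × ℤ => f (p.1, 2 * p.2)) a)
    (ho : HasSum (fun p : α × ℤ => f (p.1, 2 * p.2 + 1)) b) : HasSum f (a + b) := by
  have hinj : Function.Injective (fun n : ℤ => 2 * n) := mul_right_injective₀ two_ne_zero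
  have he' := (Function.injective_id.prodMap hinj).hasSum_range_iff.2 he
  have ho' := (Function.injective_id.prodMap
    ((add_left_injective 1).comp hinj)).hasSum_range_iff.2 ho
  refine he'.add_isCompl ?_ ho'
  simpa [Set.range_prodMap, Set.univ_prod, Function.comp_def, even_iff_exists_two_mul, eq_comm]
    using Int.isCompl_even_odd.preimage Prod.snd

lemma Complex.linearIndependent_one_of_im_ne_zero {τ : ℂ} (hτ : τ.im ≠ 0) :
    LinearIndependent ℝ ![1, τ] := by
  refine LinearIndependent.pair_iff.2 fun s t h => ?_
  have ht : t = 0 := by simpa [hτ] using congrArg Complex.im h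
  subst ht
  simpa using h

lemma summable_one_div_add_lattice_pow {τ : ℂ} (hτ : τ.im ≠ 0) (z : ℂ) {k : ℕ} (hk : 2 < k) :
    Summable fun p : ℤ × ℤ => 1 / (z + p.1 + p.2 * τ) ^ k := by
  let L : PeriodPair := ⟨1, τ, linearIndependent_one_of_im_ne_zero hτ⟩
  refine ((L.latticeEquivProd.symm.toEquiv.summable_iff).2
    (L.hasSum_sumInvPow (-z) hk).summable).congr fun p => ?_
  simp only [sub_neg_eq_add, LinearEquiv.toEquiv_symm, LinearEquiv.coe_symm_toEquiv,
    Function.comp_apply, L.latticeEquiv_symm_apply, mul_one, one_div, inv_inj, L]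
  ring

theorem landen_wp_deriv_general (τ z : ℂ) (hτ : 0 < τ.im) :
    wpT' (τ / 2) z = wpT' τ z + wpT' τ (z + τ / 2) := by
  have hcubic (w : ℂ) :=
    (summable_one_div_add_lattice_pow hτ.ne' w (k := 3) (by norm_num)).hasSum
  have hsplit : HasSum (fun p : ℤ × ℤ => 1 / (z + p.1 + p.2 * (τ / 2)) ^ 3)
      (∑' p : ℤ × ℤ, 1 / (z + p.1 + p.2 * τ) ^ 3 +
        ∑' p : ℤ × ℤ, 1 / (z + τ / 2 + p.1 + p.2 * τ) ^ 3) := by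
    refine HasSum.even_add_odd_snd ?_ ?_
    · convert hcubic z using 4 with p
      push_cast
      ring
    · convert hcubic (z + τ / 2) using 4 with p
      push_cast
      ring
  rw [wpT', wpT', wpT', hsplit.tsum_eq]
  ring

/-- Landen's identity for the derivative of the Weierstrass function:
`℘′(z, τ/2) = ℘′(z, τ) + ℘′(z + τ/2, τ)` for `z ∉ (½)ℤ + (τ/2)ℤ`. -/
theorem landen_wp_deriv (τ z : ℂ) (hτ : 0 < τ.im)
    (hz : ∀ m n : ℤ, z ≠ (m : ℂ) / 2 + (n : ℂ) * τ / 2) :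
    wpT' (τ / 2) z = wpT' τ z + wpT' τ (z + τ / 2) :=
  landen_wp_deriv_general τ z hτ
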